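/- Let (Z, μ) be a probability space, Ω a finite set, a and b positive integers, and ε > 0. Suppose φ : Z → Ω and Φ : Z → (finite subsets of Ω) are functions such that for every z ∈ Z, |Φ(z)| < a and φ(z) ∈ Φ(z). Then, choosing a function ψ : Ω → Fin b uniformly at random, with probability greater than 1 − √ε the function ψ satisfies: μ{ z ∈ Z : |ψ⁻¹(ψ(φ(z))) ∩ Φ(z)| < 1 + (1/ε)·(a/b) } > 1 − √ε. -/

import Mathlib

/-!
For a fixed point `z`, a uniformly random colouring `ψ : Ω → Fin b` gives each `ω ≠ φ z` the
colour of `φ z` with probability `1 / b`, so the expected number of extra collisions in `Φ z` is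
`(|Φ z| - 1) / b < a / b`; by Markov's inequality `z` is bad for at most an `ε`-fraction of the
colourings. Averaging over `z`, the bad set of a random `ψ` has expected measure `< ε`, and a
second Markov inequality at level `√ε` bounds the proportion of colourings whose bad set has
measure at least `√ε`.
-/

open MeasureTheory Finset

theorem Finset.card_filter_le_mul_le_sum {ι : Type*} (s : Finset ι) {f : ι → ℝ}
    (hf : ∀ i ∈ s, 0 ≤ f i) (t : ℝ) [DecidablePred fun i => t ≤ f i] :
    #{i ∈ s | t ≤ f i} * t ≤ ∑ i ∈ s, f i :=
  calc #{i ∈ s | t ≤ f i} * t = ∑ i ∈ s with t ≤ f i, t := by simp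
    _ ≤ ∑ i ∈ s with t ≤ f i, f i := sum_le_sum fun i hi => (mem_filter.mp hi).2
    _ ≤ ∑ i ∈ s, f i := sum_le_sum_of_subset_of_nonneg (filter_subset _ s)
        fun i hi _ => hf i hi

section Collisions

variable {Ω β : Type*} [Fintype Ω] [DecidableEq Ω] [Fintype β] [DecidableEq β]

theorem card_filter_apply_eq_apply_mul_card {ω ω₀ : Ω} (h : ω ≠ ω₀) :
    #{ψ : Ω → β | ψ ω = ψ ω₀} * Fintype.card β = Fintype.card (Ω → β) := by
  let e : {ψ : Ω → β // ψ ω = ψ ω₀} × β ≃ (Ω → β) :=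
    { toFun := fun p => Function.update p.1.1 ω p.2
      invFun := fun ψ => (⟨Function.update ψ ω (ψ ω₀), by simp [h.symm]⟩, ψ ω)
      left_inv := by
        rintro ⟨⟨ψ, hψ⟩, c⟩
        simp [h.symm, ← hψ]
      right_inv := fun ψ => by simp }
  rw [← Fintype.card_congr e, Fintype.card_prod, Fintype.card_subtype]

variable [Nonempty β] {s : Finset Ω} {ω₀ : Ω}

theorem sum_card_filter_apply_eq_apply_sub_one (h₀ : ω₀ ∈ s) :
    ∑ ψ : Ω → β, ((#{ω ∈ s | ψ ω = ψ ω₀} : ℝ) - 1)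
      = (#s - 1) * (Fintype.card (Ω → β) / Fintype.card β) := by
  have hβ : (Fintype.card β : ℝ) ≠ 0 := by positivity
  have hpair : ∀ ω ∈ s.erase ω₀,
      (#{ψ : Ω → β | ψ ω = ψ ω₀} : ℝ) = Fintype.card (Ω → β) / Fintype.card β := by
    intro ω hω
    rw [eq_div_iff hβ]
    exact_mod_cast card_filter_apply_eq_apply_mul_card (ne_of_mem_erase hω)
  have hswap : ∑ ψ : Ω → β, (#{ω ∈ s | ψ ω = ψ ω₀} : ℝ)
      = ∑ ω ∈ s, (#{ψ : Ω → β | ψ ω = ψ ω₀} : ℝ) := by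
    simp only [card_filter, Nat.cast_sum]
    exact sum_comm
  rw [sum_sub_distrib, hswap, ← add_sum_erase _ _ h₀, sum_congr rfl hpair]
  simp [card_erase_of_mem h₀, Nat.cast_sub (card_pos.mpr ⟨ω₀, h₀⟩)]

theorem card_filter_one_add_le_card_filter_mul_le (h₀ : ω₀ ∈ s) (t : ℝ) :
    #{ψ : Ω → β | 1 + t ≤ #{ω ∈ s | ψ ω = ψ ω₀}} * t
      ≤ (#s - 1) * (Fintype.card (Ω → β) / Fintype.card β) := by
  have hone : ∀ ψ : Ω → β, (1 : ℝ) ≤ #{ω ∈ s | ψ ω = ψ ω₀} := fun ψ =>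
    Nat.one_le_cast.mpr (card_pos.mpr ⟨ω₀, by simp [h₀]⟩)
  have hfilter : #{ψ : Ω → β | 1 + t ≤ #{ω ∈ s | ψ ω = ψ ω₀}}
      = #{ψ : Ω → β | t ≤ (#{ω ∈ s | ψ ω = ψ ω₀} : ℝ) - 1} := by
    congr 1
    ext ψ
    simp [add_comm, le_sub_iff_add_le]
  rw [hfilter, ← sum_card_filter_apply_eq_apply_sub_one h₀]
  exact card_filter_le_mul_le_sum _ (fun ψ _ => sub_nonneg.mpr (hone ψ)) t

end Collisions

section Measure

variable {Z ι : Type*} [MeasurableSpace Z] [Fintype ι] (μ : Measure Z) [IsProbabilityMeasure μ]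

open Classical in
theorem sum_measureReal_le_of_forall_card_le {S : ι → Set Z} (hS : ∀ i, MeasurableSet (S i))
    {K : ℝ} (hK : ∀ z, #{i | z ∈ S i} ≤ K) : ∑ i, μ.real (S i) ≤ K := by
  have hind : ∀ z, ∑ i, (S i).indicator (1 : Z → ℝ) z = #{i | z ∈ S i} := by
    intro z
    simp [Set.indicator_apply]
  have hint : ∀ i, Integrable ((S i).indicator (1 : Z → ℝ)) μ := fun i =>
    (integrable_const 1).indicator (hS i)
  calc ∑ i, μ.real (S i) = ∫ z, ∑ i, (S i).indicator 1 z ∂μ := by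
        rw [integral_finsetSum _ fun i _ => hint i]
        simp [integral_indicator_one (hS _)]
    _ ≤ ∫ _, K ∂μ := integral_mono (integrable_finsetSum _ fun i _ => hint i)
          (integrable_const K) fun z => (hind z).le.trans (hK z)
    _ = K := by simp

open Classical in
theorem one_sub_lt_card_filter_measureReal_div [Nonempty ι] {G : ι → Set Z}
    (hG : ∀ i, MeasurableSet (G i)) {δ K : ℝ} (hδ : 0 < δ) (hK : ∀ z, #{i | z ∉ G i} ≤ K)
    (hKδ : K < δ ^ 2 * Fintype.card ι) :
    1 - δ < #{i | 1 - δ < μ.real (G i)} / Fintype.card ι := by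
  have hN : (0 : ℝ) < Fintype.card ι := by exact_mod_cast Fintype.card_pos
  have hbad : (#{i | δ ≤ μ.real (G i)ᶜ} : ℝ) * δ < δ * Fintype.card ι * δ :=
    calc (#{i | δ ≤ μ.real (G i)ᶜ} : ℝ) * δ ≤ ∑ i, μ.real (G i)ᶜ :=
          card_filter_le_mul_le_sum _ (fun _ _ => measureReal_nonneg) δ
      _ ≤ K := sum_measureReal_le_of_forall_card_le μ (fun i => (hG i).compl)
          fun z => by simpa only [Set.mem_compl_iff] using hK z
      _ < δ * Fintype.card ι * δ := by linarith
  have hcompl : #{i | δ ≤ μ.real (G i)ᶜ} = #{i | ¬1 - δ < μ.real (G i)} := by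
    congr 1
    ext i
    simp [probReal_compl_eq_one_sub (hG i), not_lt, le_sub_comm]
  have hsplit : (#{i | 1 - δ < μ.real (G i)} : ℝ) + #{i | δ ≤ μ.real (G i)ᶜ}
      = Fintype.card ι := by
    rw [hcompl]
    exact_mod_cast card_filter_add_card_filter_not _
  rw [lt_div_iff₀ hN]
  nlinarith [lt_of_mul_lt_mul_right hbad hδ.le]

end Measure

theorem measurableSet_setOf_finset_apply {Z Ω : Type*} [MeasurableSpace Z] [MeasurableSpace Ω]
    [MeasurableSingletonClass Ω] [Countable Ω] {φ : Z → Ω} {Φ : Z → Finset Ω}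
    (hφ : Measurable φ) (hΦ : ∀ s : Finset Ω, MeasurableSet {z | Φ z = s})
    (P : Finset Ω → Ω → Prop) : MeasurableSet {z | P (Φ z) (φ z)} := by
  have : {z | P (Φ z) (φ z)} = ⋃ s : Finset Ω, {z | Φ z = s} ∩ φ ⁻¹' {ω | P s ω} := by
    ext z
    simp
  rw [this]
  exact .iUnion fun s => (hΦ s).inter (hφ (Set.to_countable _).measurableSet)

open Classical in
theorem stmt0 {Z Ω : Type*} [MeasurableSpace Z] (μ : Measure Z) [IsProbabilityMeasure μ]
    [MeasurableSpace Ω] [MeasurableSingletonClass Ω] [Fintype Ω]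
    (a b : ℕ) (ha : 0 < a) (hb : 0 < b) (ε : ℝ) (hε : 0 < ε)
    (φ : Z → Ω) (Φ : Z → Finset Ω) (hφ : Measurable φ)
    (hΦ : ∀ s : Finset Ω, MeasurableSet {z | Φ z = s})
    (hcard : ∀ z, (Φ z).card < a) (hmem : ∀ z, φ z ∈ Φ z) :
    ((Finset.univ.filter (fun ψ : Ω → Fin b =>
        (μ {z | (((Φ z).filter (fun ω => ψ ω = ψ (φ z))).card : ℝ)
            < 1 + (1 / ε) * ((a : ℝ) / (b : ℝ))}).toReal
          > 1 - Real.sqrt ε)).card : ℝ) / (Fintype.card (Ω → Fin b) : ℝ)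
      > 1 - Real.sqrt ε := by
  have : NeZero b := ⟨hb.ne'⟩
  set t := 1 / ε * ((a : ℝ) / b)
  set N : ℝ := (Fintype.card (Ω → Fin b) : ℝ)
  have ht : 0 < t := by positivity
  have hbad (z : Z) : #{ψ : Ω → Fin b | ¬(#{ω ∈ Φ z | ψ ω = ψ (φ z)} : ℝ) < 1 + t}
      ≤ (a - 1) * (N / b) / t := by
    have hΦz : (#(Φ z) : ℝ) - 1 ≤ a - 1 := by
      have : (#(Φ z) : ℝ) ≤ a := by exact_mod_cast (hcard z).le
      linarith
    rw [le_div_iff₀ ht]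
    simp only [not_lt]
    refine (card_filter_one_add_le_card_filter_mul_le (hmem z) t).trans ?_
    rw [Fintype.card_fin]
    exact mul_le_mul_of_nonneg_right hΦz (by positivity)
  have hK : (a - 1) * (N / b) / t < Real.sqrt ε ^ 2 * N := by
    have ha' : (0 : ℝ) < a := by exact_mod_cast ha
    calc (a - 1) * (N / b) / t = ε * N * ((a - 1) / a) := by simp only [t]; field_simp
      _ < ε * N := mul_lt_of_lt_one_right (by positivity) ((div_lt_one ha').mpr (by linarith))
      _ = Real.sqrt ε ^ 2 * N := by rw [Real.sq_sqrt hε.le]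
  exact one_sub_lt_card_filter_measureReal_div μ
    (G := fun ψ : Ω → Fin b => {z | (#{ω ∈ Φ z | ψ ω = ψ (φ z)} : ℝ) < 1 + t})
    (fun ψ => measurableSet_setOf_finset_apply hφ hΦ
      fun s ω => (#{ω' ∈ s | ψ ω' = ψ ω} : ℝ) < 1 + t) (Real.sqrt_pos.mpr hε) hbad hK
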